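/- Let (T, M) be a valuation domain with residue field k and residue map π : T → k, and let D be an integral domain with fraction field k, viewed as a subring of k. If D is globally perinormal, then the pullback A := D ×_k T = π⁻¹(D) is globally perinormal. -/

import Mathlib

/-
Since the pullback `A` contains the maximal ideal `M` of the valuation ring `T`, every overring
`S` of `A` is comparable with `T`: an element `x ∈ S \ T` has `x⁻¹ ∈ M ⊆ A`, so `T ⊆ M x ⊆ S`.
If `T ⊆ S`, then `S` is a localization of `A` outright: elements outside `T` are inverses of
elements of `M`, and for `z ∈ T` a denominator of `π z` in `D` lifts to a unit of `T` lying in `A`.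
If `S ⊆ T`, then `S = π⁻¹(E)` for `E = π(S)`, and the square `A → S` over `D → E` is cartesian
with surjective vertical maps, so going-down and flatness descend from `A → S` to `D → E`.
Global perinormality of `D` makes `E` a localization of `D`, and the denominators lift back.
So every going-down or flat overring of `A` is a localization of `A`, hence flat.
-/

def GoesDown {R S : Type*} [CommRing R] [CommRing S] (f : R →+* S) : Prop :=
  ∀ ⦃p' p : Ideal R⦄, p'.IsPrime → p.IsPrime → p' ≤ p →
    ∀ ⦃q : Ideal S⦄, q.IsPrime → q.comap f = p →
      ∃ q' : Ideal S, q'.IsPrime ∧ q' ≤ q ∧ q'.comap f = p'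

def IsPerinormalSubring {F : Type*} [Field F] (R : Subring F) : Prop :=
  ∀ S : Subring F, ∀ h : R ≤ S, GoesDown (Subring.inclusion h) →
    @Module.Flat R S _ _ (RingHom.toAlgebra (Subring.inclusion h)).toModule

def IsGloballyPerinormalSubring {F : Type*} [Field F] (R : Subring F) : Prop :=
  IsPerinormalSubring R ∧
    ∀ S : Subring F, ∀ h : R ≤ S,
      @Module.Flat R S _ _ (RingHom.toAlgebra (Subring.inclusion h)).toModule →
        ∃ W : Submonoid R, @IsLocalization R _ W S _ (RingHom.toAlgebra (Subring.inclusion h))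

section PullbackSquare

variable {A S D E : Type*} [CommRing A] [CommRing S] [CommRing D] [CommRing E]
  {f : A →+* S} {g : D →+* E} {ρ : A →+* D} {τ : S →+* E}

theorem GoesDown.of_pullback_square (hρ : Function.Surjective ρ) (hτ : Function.Surjective τ)
    (hcomm : g.comp ρ = τ.comp f) (hker : (RingHom.ker τ : Set S) ⊆ f '' RingHom.ker ρ)
    (hf : GoesDown f) : GoesDown g := by
  intro p' p hp' hp hle q hq hqp
  have hQ : (q.comap τ).comap f = p.comap ρ := by
    rw [Ideal.comap_comap, ← hcomm, ← Ideal.comap_comap, hqp]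
  obtain ⟨Q, hQprime, hQq, hQp'⟩ :=
    hf (hp'.comap ρ) (hp.comap ρ) (Ideal.comap_mono hle) (hq.comap τ) hQ
  have hkerQ : RingHom.ker τ ≤ Q := by
    intro s hs
    obtain ⟨a, ha, rfl⟩ := hker hs
    have : a ∈ p'.comap ρ := by simp [Ideal.mem_comap, RingHom.mem_ker.mp ha]
    rwa [← hQp'] at this
  have hcomap : (Q.map τ).comap τ = Q := by
    rw [Ideal.comap_map_of_surjective' τ hτ, sup_eq_left.mpr hkerQ]
  refine ⟨Q.map τ, Ideal.map_isPrime_of_surjective hτ hkerQ,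
    Ideal.map_le_iff_le_comap.mpr hQq, Ideal.comap_injective_of_surjective ρ hρ ?_⟩
  rw [Ideal.comap_comap, hcomm, ← Ideal.comap_comap, hcomap, hQp']

theorem Module.Flat.of_pullback_square (hρ : Function.Surjective ρ)
    (hτ : Function.Surjective τ) (hcomm : g.comp ρ = τ.comp f)
    (hker : (RingHom.ker τ : Set S) ⊆ f '' RingHom.ker ρ)
    (hf : @Module.Flat A S _ _ f.toAlgebra.toModule) :
    @Module.Flat D E _ _ g.toAlgebra.toModule := by
  let := f.toAlgebra
  let := ρ.toAlgebra
  let := g.toAlgebra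
  let : Algebra A E := (g.comp ρ).toAlgebra
  have : IsScalarTower A D E := IsScalarTower.of_algebraMap_eq fun _ => rfl
  let τₐ : S →ₐ[A] E := { τ with commutes' := fun a => (RingHom.congr_fun hcomm a).symm }
  let φ := τₐ.toLinearMap.liftBaseChange D
  have hφ : ∀ s : S, φ (1 ⊗ₜ s) = τ s := fun s => by simp [φ, τₐ]
  have hsurj := TensorProduct.mk_surjective (R := A) (S := D) (M := S) hρ
  have hbij : Function.Bijective φ := by
    refine ⟨(injective_iff_map_eq_zero φ).mpr fun x hx => ?_, fun e => ?_⟩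
    · obtain ⟨s, rfl⟩ := hsurj x
      obtain ⟨a, ha, rfl⟩ := hker (show τ s = 0 by rwa [← hφ])
      change (1 : D) ⊗ₜ[A] algebraMap A S a = 0
      rw [Algebra.algebraMap_eq_smul_one, ← TensorProduct.smul_tmul,
        ← Algebra.algebraMap_eq_smul_one]
      change ρ a ⊗ₜ[A] (1 : S) = 0
      rw [RingHom.mem_ker.mp ha, TensorProduct.zero_tmul]
    · obtain ⟨s, rfl⟩ := hτ e
      exact ⟨1 ⊗ₜ s, hφ s⟩
  exact Module.Flat.isBaseChange A D S E
    (f := τₐ.toLinearMap) (IsBaseChange.of_equiv (LinearEquiv.ofBijective φ hbij) hφ)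

end PullbackSquare

namespace Subring

variable {F : Type*} [Field F]

-- `b ≠ 0` matters: `0⁻¹ = 0` would make `b = 0` a witness for every `z`.
def IsRingOfFractions (R S : Subring F) : Prop :=
  ∀ z ∈ S, ∃ b ∈ R, b ≠ 0 ∧ b⁻¹ ∈ S ∧ z * b ∈ R

theorem exists_isLocalization_iff {R S : Subring F} (h : R ≤ S) :
    (∃ W : Submonoid R, @IsLocalization R _ W S _ (inclusion h).toAlgebra) ↔
      IsRingOfFractions R S := by
  let := (inclusion h).toAlgebra
  constructor
  · rintro ⟨W, hW⟩ z hz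
    obtain ⟨⟨a, w⟩, hw⟩ := IsLocalization.surj W (⟨z, hz⟩ : S)
    obtain ⟨u, hu⟩ := IsLocalization.map_units S w
    have hu' : (u : F) = (w : F) := congrArg Subtype.val hu
    have hmul : (w : F) * (u⁻¹ : Sˣ) = 1 := by rw [← hu']; exact congrArg Subtype.val u.mul_inv
    refine ⟨w, (w : R).2, left_ne_zero_of_mul_eq_one hmul, ?_, ?_⟩
    · rw [inv_eq_of_mul_eq_one_right hmul]; exact (u⁻¹ : Sˣ).1.2
    · rw [show z * w = a from congrArg Subtype.val hw]; exact a.2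
  · intro hRS
    refine ⟨(IsUnit.submonoid S).comap (inclusion h), ⟨fun w => w.2, fun z => ?_, fun hxy => ?_⟩⟩
    · obtain ⟨b, hbR, hb0, hbS, hzb⟩ := hRS z z.2
      refine ⟨⟨⟨_, hzb⟩, ⟨⟨b, hbR⟩, IsUnit.of_mul_eq_one ⟨b⁻¹, hbS⟩ ?_⟩⟩, rfl⟩
      exact Subtype.ext (mul_inv_cancel₀ hb0)
    · exact ⟨1, by rw [inclusion_injective h hxy]⟩

end Subring

section Pullback

open IsLocalRing Subring

variable {K k : Type*} [Field K] [Field k] {T : Subring K} {π : T →+* k} {D : Subring k}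

theorem Subring.exists_inv_mem_maximalIdeal [ValuationRing T] [IsFractionRing T K] {x : K}
    (hx : x ∉ T) : ∃ h : x⁻¹ ∈ T, (⟨x⁻¹, h⟩ : T) ∈ maximalIdeal T := by
  rcases ValuationRing.isInteger_or_isInteger T x with ⟨t, rfl⟩ | ⟨t, ht⟩
  · exact absurd t.2 hx
  have hxT : x⁻¹ ∈ T := ht ▸ t.2
  refine ⟨hxT, fun hunit => hx ?_⟩
  obtain ⟨s, hs⟩ := hunit.exists_right_inv
  have hx0 : x ≠ 0 := by rintro rfl; simp at hx
  have : x⁻¹ * s = 1 := congrArg Subtype.val hs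
  rw [inv_mul_eq_one₀ hx0] at this
  exact this ▸ s.2

theorem mem_pullback_iff {x : K} :
    x ∈ (D.comap π).map T.subtype ↔ ∃ h : x ∈ T, π ⟨x, h⟩ ∈ D := by
  simp [Subring.mem_map]

theorem coe_mem_pullback_of_map_eq_zero {t : T} (ht : π t = 0) :
    (t : K) ∈ (D.comap π).map T.subtype :=
  mem_pullback_iff.mpr ⟨t.2, ht ▸ D.zero_mem⟩

theorem mem_of_map_mem_range {S : Subring K} (hAS : (D.comap π).map T.subtype ≤ S)
    (hST : S ≤ T) {x : K} (hx : x ∈ T) (hxE : π ⟨x, hx⟩ ∈ (π.comp (inclusion hST)).range) :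
    x ∈ S := by
  obtain ⟨s, hs⟩ := hxE
  have hdiff : π (⟨x, hx⟩ - inclusion hST s) = 0 := by
    rw [map_sub, ← RingHom.comp_apply, hs, sub_self]
  simpa using S.add_mem (hAS (coe_mem_pullback_of_map_eq_zero hdiff)) s.2

section LocalRing

variable [IsLocalRing T] (hker : RingHom.ker π = maximalIdeal T)
include hker

theorem exists_inv_map_of_map_ne_zero {t : T} (ht : π t ≠ 0) :
    ∃ h : (t : K)⁻¹ ∈ T, π ⟨(t : K)⁻¹, h⟩ = (π t)⁻¹ := by
  obtain ⟨u, rfl⟩ := notMem_maximalIdeal.mp (hker ▸ mt RingHom.mem_ker.mp ht)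
  have hinv : ((u : T) : K)⁻¹ = ((u⁻¹ : Tˣ) : T) :=
    (eq_inv_of_mul_eq_one_right (congrArg Subtype.val u.mul_inv)).symm
  exact ⟨hinv ▸ (u⁻¹ : Tˣ).1.2, by simp only [hinv]; exact map_units_inv π u⟩

variable (hπ : Function.Surjective π)
include hπ

theorem exists_lift_mem_pullback {w : k} (hw : w ∈ D) (hw0 : w ≠ 0) :
    ∃ t : T, π t = w ∧ (t : K) ∈ (D.comap π).map T.subtype ∧ (t : K) ≠ 0 ∧
      ∃ h : (t : K)⁻¹ ∈ T, π ⟨(t : K)⁻¹, h⟩ = w⁻¹ := by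
  obtain ⟨t, rfl⟩ := hπ w
  refine ⟨t, rfl, mem_pullback_iff.mpr ⟨t.2, hw⟩, fun h => hw0 ?_,
    exists_inv_map_of_map_ne_zero hker hw0⟩
  rw [show t = 0 from Subtype.ext h, map_zero]

theorem isRingOfFractions_of_le {S : Subring K} (hAS : (D.comap π).map T.subtype ≤ S)
    (hST : S ≤ T) (hE : IsRingOfFractions D (π.comp (inclusion hST)).range) :
    IsRingOfFractions ((D.comap π).map T.subtype) S := by
  intro z hz
  obtain ⟨w, hwD, hw0, hwE, hzw⟩ := hE _ ⟨⟨z, hz⟩, rfl⟩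
  obtain ⟨t, rfl, htA, ht0, htT, htinv⟩ := exists_lift_mem_pullback hker hπ hwD hw0
  refine ⟨t, htA, ht0, mem_of_map_mem_range hAS hST htT (htinv ▸ hwE),
    mem_pullback_iff.mpr ⟨T.mul_mem (hST hz) t.2, ?_⟩⟩
  change π (⟨z, hST hz⟩ * t) ∈ D
  rwa [map_mul]

end LocalRing

section Square

variable (hπ : Function.Surjective π) {S : Subring K}
  (hAS : (D.comap π).map T.subtype ≤ S) (hST : S ≤ T)
include hπ hAS

theorem le_range_of_pullback_le : D ≤ (π.comp (inclusion hST)).range := by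
  intro d hd
  obtain ⟨t, rfl⟩ := hπ d
  exact ⟨⟨t, hAS (mem_pullback_iff.mpr ⟨t.2, hd⟩)⟩, rfl⟩

theorem goesDown_or_flat_range
    (hS : GoesDown (inclusion hAS) ∨
      @Module.Flat _ S _ _ (inclusion hAS).toAlgebra.toModule) :
    GoesDown (inclusion (le_range_of_pullback_le hπ hAS hST)) ∨
      @Module.Flat D (π.comp (inclusion hST)).range _ _
        (inclusion (le_range_of_pullback_le hπ hAS hST)).toAlgebra.toModule := by
  have hAT : (D.comap π).map T.subtype ≤ T := le_trans hAS hST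
  let ρ : (D.comap π).map T.subtype →+* D :=
    (π.comp (inclusion hAT)).codRestrict D fun a => (mem_pullback_iff.mp a.2).2
  have hρ : Function.Surjective ρ := by
    intro d
    obtain ⟨t, ht⟩ := hπ d
    exact ⟨⟨t, mem_pullback_iff.mpr ⟨t.2, ht ▸ d.2⟩⟩, Subtype.ext ht⟩
  have hker : (RingHom.ker (π.comp (inclusion hST)).rangeRestrict : Set S) ⊆
      inclusion hAS '' RingHom.ker ρ := by
    intro s hs
    have hs0 : π (inclusion hST s) = 0 := congrArg Subtype.val (RingHom.mem_ker.mp hs)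
    exact ⟨⟨s, coe_mem_pullback_of_map_eq_zero hs0⟩, Subtype.ext hs0, rfl⟩
  exact hS.imp
    (GoesDown.of_pullback_square hρ (RingHom.rangeRestrict_surjective _) rfl hker)
    (Module.Flat.of_pullback_square hρ (RingHom.rangeRestrict_surjective _) rfl hker)

end Square

variable [ValuationRing T] [IsFractionRing T K] (hker : RingHom.ker π = maximalIdeal T)
include hker

theorem le_or_ge_of_pullback_le {S : Subring K} (hAS : (D.comap π).map T.subtype ≤ S) :
    S ≤ T ∨ T ≤ S := by
  refine or_iff_not_imp_left.mpr fun hST y hy => ?_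
  obtain ⟨x, hxS, hxT⟩ := Set.not_subset.mp hST
  obtain ⟨hxT', hxM⟩ := exists_inv_mem_maximalIdeal hxT
  have hx0 : x ≠ 0 := by rintro rfl; simp at hxT
  have hyx : y * x⁻¹ ∈ (D.comap π).map T.subtype := by
    refine coe_mem_pullback_of_map_eq_zero (D := D) (t := (⟨y, hy⟩ : T) * ⟨x⁻¹, hxT'⟩) ?_
    rw [map_mul, RingHom.mem_ker.mp (hker ▸ hxM : (⟨x⁻¹, hxT'⟩ : T) ∈ RingHom.ker π), mul_zero]
  simpa [hx0] using S.mul_mem (hAS hyx) hxS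

theorem isRingOfFractions_of_ge (hπ : Function.Surjective π) [IsFractionRing D k]
    {S : Subring K} (hTS : T ≤ S) : IsRingOfFractions ((D.comap π).map T.subtype) S := by
  intro z hzS
  by_cases hz : z ∈ T
  · obtain ⟨x, y, hy, hxy⟩ := IsFractionRing.div_surjective (A := D) (π ⟨z, hz⟩)
    have hy0 : (y : k) ≠ 0 := by simpa using nonZeroDivisors.ne_zero hy
    obtain ⟨t, ht, htA, ht0, htT, -⟩ := exists_lift_mem_pullback hker hπ y.2 hy0
    refine ⟨t, htA, ht0, hTS htT, mem_pullback_iff.mpr ⟨T.mul_mem hz t.2, ?_⟩⟩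
    change π (⟨z, hz⟩ * t) ∈ D
    rw [map_mul, ← hxy, ht]
    exact (div_mul_cancel₀ (x : k) hy0).symm ▸ x.2
  · obtain ⟨hzT, hzM⟩ := exists_inv_mem_maximalIdeal hz
    have hz0 : z ≠ 0 := by rintro rfl; simp at hz
    refine ⟨z⁻¹, coe_mem_pullback_of_map_eq_zero (hker ▸ hzM : _ ∈ RingHom.ker π),
      inv_ne_zero hz0, by rwa [inv_inv], ?_⟩
    rw [mul_inv_cancel₀ hz0]
    exact one_mem _

theorem isRingOfFractions_of_goesDown_or_flat (hπ : Function.Surjective π) [IsFractionRing D k]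
    (hD : IsGloballyPerinormalSubring D) {S : Subring K} (hAS : (D.comap π).map T.subtype ≤ S)
    (hS : GoesDown (inclusion hAS) ∨
      @Module.Flat _ S _ _ (inclusion hAS).toAlgebra.toModule) :
    IsRingOfFractions ((D.comap π).map T.subtype) S := by
  rcases le_or_ge_of_pullback_le hker hAS with hST | hTS
  · have hDE := le_range_of_pullback_le hπ hAS hST
    have hflat := (goesDown_or_flat_range hπ hAS hST hS).elim (hD.1 _ hDE) id
    exact isRingOfFractions_of_le hker hπ hAS hST
      ((exists_isLocalization_iff hDE).mp (hD.2 _ hDE hflat))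
  · exact isRingOfFractions_of_ge hker hπ hTS

end Pullback

/-- Let `(T, M)` be a valuation domain (a subring of its fraction field `K`) with
residue field `k` and residue map `π`, and let `D` be a subring of `k` with fraction
field `k`. If `D` is globally perinormal, then the pullback `A = π⁻¹(D)` is globally
perinormal. -/
theorem stmt_15 {K k : Type*} [Field K] [Field k] (T : Subring K)
    [ValuationRing T] [IsFractionRing T K]
    (π : T →+* k) (hπ : Function.Surjective π)
    (hker : RingHom.ker π = IsLocalRing.maximalIdeal T)
    (D : Subring k) [IsFractionRing D k]
    (hD : IsGloballyPerinormalSubring D) :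
    IsGloballyPerinormalSubring ((D.comap π).map T.subtype) := by
  have hloc : ∀ (S : Subring K) (h : (D.comap π).map T.subtype ≤ S),
      GoesDown (Subring.inclusion h) ∨
        @Module.Flat _ S _ _ (Subring.inclusion h).toAlgebra.toModule →
      ∃ W : Submonoid _, @IsLocalization _ _ W S _ (Subring.inclusion h).toAlgebra :=
    fun S h hS => (Subring.exists_isLocalization_iff h).mpr
      (isRingOfFractions_of_goesDown_or_flat hker hπ hD h hS)
  refine ⟨fun S h hS => ?_, fun S h hS => hloc S h (.inr hS)⟩
  obtain ⟨W, hW⟩ := hloc S h (.inl hS)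
  let := (Subring.inclusion h).toAlgebra
  exact IsLocalization.flat S W
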